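/- For q ∈ (0,1), c ∈ ℝ with |c| < 1, and f : Λ_n → ℂ in ℓ²(Λ_n, N⁻¹), the annihilation operator β_l (deleting a part of size l) satisfies the norm bound ⟨β_l f, β_l f⟩_{n−1} ≤ ((1 + |c|δ_{l,0})/(1 − q)) ⟨f, f⟩_n, where ⟨f,g⟩_n = ∑_{λ∈Λ_n} f(λ) conj(g(λ)) N(λ)⁻¹ and N(λ) = (c;q)_{m₀(λ)} ∏_l [m_l(λ)]!. -/

import Mathlib

/-- The q-factorial `[m]! = ∏_{k=1}^m (1-q^k)/(1-q)`. -/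
noncomputable def qFactorial (q : ℝ) (m : ℕ) : ℝ :=
  ∏ k ∈ Finset.range m, (1 - q ^ (k + 1)) / (1 - q)

/-- The norm constant `N(λ) = (c;q)_{m₀(λ)} ∏_l [m_l(λ)]!`, for a partition encoded
as a multiset of parts (zeros included). -/
noncomputable def normConst (q c : ℝ) (s : Multiset ℕ) : ℝ :=
  (∏ j ∈ Finset.range (s.count 0), (1 - c * q ^ j)) *
    ∏ l ∈ s.toFinset, qFactorial q (s.count l)

/-!
Inserting a part of size `l` into `λ` multiplies the norm constant by
`[m_l(λ) + 1] (1 - c δ_{l,0} q^{m₀(λ)})`, and `[m] ≤ 1/(1-q)`, `1 - c q^m ≤ 1 + |c|`.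
Hence `N(λ)⁻¹ ≤ ((1 + |c| δ_{l,0})/(1-q)) N(β_l^* λ)⁻¹` pointwise, and summing over `λ`
(on which `β_l^*` is injective) gives the bound.
-/

theorem qFactorial_succ (q : ℝ) (m : ℕ) :
    qFactorial q (m + 1) = (1 - q ^ (m + 1)) / (1 - q) * qFactorial q m := by
  rw [qFactorial, Finset.prod_range_succ, qFactorial, mul_comm]

theorem qFactorial_pos {q : ℝ} (hq0 : 0 ≤ q) (hq1 : q < 1) (m : ℕ) : 0 < qFactorial q m :=
  Finset.prod_pos fun k _ =>
    div_pos (sub_pos.mpr (pow_lt_one₀ hq0 hq1 k.succ_ne_zero)) (sub_pos.mpr hq1)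

theorem abs_mul_pow_le_abs {q : ℝ} (c : ℝ) (hq0 : 0 ≤ q) (hq1 : q ≤ 1) (j : ℕ) :
    |c * q ^ j| ≤ |c| := by
  rw [abs_mul, abs_pow, abs_of_nonneg hq0]
  exact mul_le_of_le_one_right (abs_nonneg c) (pow_le_one₀ hq0 hq1)

theorem one_sub_mul_pow_pos {q c : ℝ} (hq0 : 0 ≤ q) (hq1 : q ≤ 1) (hc : |c| < 1) (j : ℕ) :
    0 < 1 - c * q ^ j := by
  linarith [le_abs_self (c * q ^ j), abs_mul_pow_le_abs c hq0 hq1 j]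

theorem one_sub_mul_pow_le {q : ℝ} (c : ℝ) (hq0 : 0 ≤ q) (hq1 : q ≤ 1) (j : ℕ) :
    1 - c * q ^ j ≤ 1 + |c| := by
  linarith [neg_abs_le (c * q ^ j), abs_mul_pow_le_abs c hq0 hq1 j]

theorem normConst_pos {q c : ℝ} (hq0 : 0 ≤ q) (hq1 : q < 1) (hc : |c| < 1) (s : Multiset ℕ) :
    0 < normConst q c s :=
  mul_pos (Finset.prod_pos fun j _ => one_sub_mul_pow_pos hq0 hq1.le hc j)
    (Finset.prod_pos fun _ _ => qFactorial_pos hq0 hq1 _)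

theorem prod_qFactorial_count_cons (q : ℝ) (l : ℕ) (t : Multiset ℕ) :
    ∏ x ∈ (l ::ₘ t).toFinset, qFactorial q ((l ::ₘ t).count x)
      = (1 - q ^ (t.count l + 1)) / (1 - q) * ∏ x ∈ t.toFinset, qFactorial q (t.count x) := by
  have hl : l ∈ (l ::ₘ t).toFinset := by simp
  -- `[0]! = 1`, so the right-hand product may range over `(l ::ₘ t).toFinset` as well
  have hext : ∏ x ∈ t.toFinset, qFactorial q (t.count x)
      = ∏ x ∈ (l ::ₘ t).toFinset, qFactorial q (t.count x) :=
    Finset.prod_subset (Multiset.toFinset_subset.mpr (Multiset.subset_cons t l))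
      fun x _ hx => by rw [Multiset.count_eq_zero.mpr (by simpa using hx)]; rfl
  rw [hext, ← Finset.mul_prod_erase _ _ hl, ← Finset.mul_prod_erase _ _ hl,
    Multiset.count_cons_self, qFactorial_succ, mul_assoc]
  congr 2
  refine Finset.prod_congr rfl fun x hx => ?_
  rw [Multiset.count_cons_of_ne (Finset.ne_of_mem_erase hx)]

theorem normConst_cons (q c : ℝ) (l : ℕ) (t : Multiset ℕ) :
    normConst q c (l ::ₘ t)
      = (if l = 0 then 1 - c * q ^ t.count 0 else 1) *
        ((1 - q ^ (t.count l + 1)) / (1 - q)) * normConst q c t := by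
  rw [normConst, normConst, prod_qFactorial_count_cons]
  split_ifs with h
  · subst h
    rw [Multiset.count_cons_self, Finset.prod_range_succ]
    ring
  · rw [Multiset.count_cons_of_ne (Ne.symm h)]
    ring

theorem normConst_cons_le {q c : ℝ} (hq0 : 0 ≤ q) (hq1 : q < 1) (hc : |c| < 1) (l : ℕ)
    (t : Multiset ℕ) :
    normConst q c (l ::ₘ t)
      ≤ (1 + |c| * (if l = 0 then 1 else 0)) / (1 - q) * normConst q c t := by
  have hzero :
      (if l = 0 then 1 - c * q ^ t.count 0 else 1) ≤ 1 + |c| * (if l = 0 then 1 else 0) := by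
    split_ifs
    · simpa using one_sub_mul_pow_le c hq0 hq1.le (t.count 0)
    · simp
  have hqint : (1 - q ^ (t.count l + 1)) / (1 - q) ≤ 1 / (1 - q) :=
    div_le_div_of_nonneg_right (by linarith [pow_nonneg hq0 (t.count l + 1)])
      (sub_nonneg.mpr hq1.le)
  have hqint0 : 0 ≤ (1 - q ^ (t.count l + 1)) / (1 - q) :=
    div_nonneg (sub_nonneg.mpr (pow_le_one₀ hq0 hq1.le)) (sub_nonneg.mpr hq1.le)
  have hN : 0 ≤ normConst q c t := (normConst_pos hq0 hq1 hc t).le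
  rw [normConst_cons, ← mul_one_div (1 + _)]
  gcongr

theorem inv_normConst_le_mul_inv_normConst_cons {q c : ℝ} (hq0 : 0 ≤ q) (hq1 : q < 1)
    (hc : |c| < 1) (l : ℕ) (t : Multiset ℕ) :
    (normConst q c t)⁻¹
      ≤ (1 + |c| * (if l = 0 then 1 else 0)) / (1 - q) * (normConst q c (l ::ₘ t))⁻¹ := by
  rw [le_mul_inv_iff₀ (normConst_pos hq0 hq1 hc _), inv_mul_le_iff₀ (normConst_pos hq0 hq1 hc _),
    mul_comm (normConst q c t)]
  exact normConst_cons_le hq0 hq1 hc l t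

/-- Norm bound for the annihilation operator `β_l` on the `n`-particle space
`ℓ²(Λ_n, N⁻¹)`: `⟨β_l f, β_l f⟩_{n-1} ≤ ((1 + |c| δ_{l,0})/(1-q)) ⟨f, f⟩_n`, where
`(β_l f)(λ) = f(β_l^* λ)` and `β_l^* λ` inserts a part of size `l`. -/
theorem annihilation_operator_bound (q c : ℝ) (hq0 : 0 < q) (hq1 : q < 1)
    (hc : |c| < 1) (n : ℕ) (hn : 1 ≤ n) (l : ℕ)
    (f : {s : Multiset ℕ // Multiset.card s = n} → ℂ)
    (hf : Summable fun s : {s : Multiset ℕ // Multiset.card s = n} =>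
      ‖f s‖ ^ 2 * (normConst q c s.1)⁻¹) :
    (∑' t : {s : Multiset ℕ // Multiset.card s = n - 1},
        ‖f ⟨l ::ₘ t.1, by simp [t.2, Nat.sub_add_cancel hn]⟩‖ ^ 2 *
          (normConst q c t.1)⁻¹)
      ≤ ((1 + |c| * (if l = 0 then 1 else 0)) / (1 - q)) *
          ∑' s : {s : Multiset ℕ // Multiset.card s = n},
            ‖f s‖ ^ 2 * (normConst q c s.1)⁻¹ := by
  set C := (1 + |c| * (if l = 0 then 1 else 0)) / (1 - q)
  set insertPart : {s : Multiset ℕ // Multiset.card s = n - 1} →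
      {s : Multiset ℕ // Multiset.card s = n} :=
    fun t => ⟨l ::ₘ t.1, by simp [t.2, Nat.sub_add_cancel hn]⟩
  have hinj : Function.Injective insertPart := fun t₁ t₂ h =>
    Subtype.ext ((Multiset.cons_inj_right l).mp (congrArg Subtype.val h))
  have hweight (s : Multiset ℕ) : 0 ≤ (normConst q c s)⁻¹ :=
    inv_nonneg.mpr (normConst_pos hq0.le hq1 hc s).le
  have hC : 0 ≤ C := div_nonneg (by positivity) (sub_nonneg.mpr hq1.le)
  have hpt (t : {s : Multiset ℕ // Multiset.card s = n - 1}) :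
      ‖f (insertPart t)‖ ^ 2 * (normConst q c t.1)⁻¹
        ≤ C * (‖f (insertPart t)‖ ^ 2 * (normConst q c (insertPart t).1)⁻¹) := by
    rw [mul_left_comm]
    gcongr
    exact inv_normConst_le_mul_inv_normConst_cons hq0.le hq1 hc l t.1
  calc _ ≤ ∑' s, C * (‖f s‖ ^ 2 * (normConst q c s.1)⁻¹) :=
        Summable.tsum_le_tsum_of_inj insertPart hinj
          (fun s _ => mul_nonneg hC (mul_nonneg (by positivity) (hweight _))) hpt
          (Summable.of_nonneg_of_le (fun t => mul_nonneg (by positivity) (hweight _)) hpt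
            ((hf.comp_injective hinj).mul_left C))
          (hf.mul_left C)
    _ = C * _ := tsum_mul_left
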